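/- arXiv:1702.03841 — 4 statements merged into one kernel-verified Lean document; each statement's English description precedes it below -/
import Mathlib

section
/- Let $S$ be a finite nonempty type, and for each $\alpha \in [0,1]$ let $P_\alpha$ be a probability mass function on $S$ such that $\alpha \mapsto P_\alpha(x)$ is continuous for every $x \in S$. Fix $\kappa \in [0,1]$ and $y \in S$ with $P_\kappa(y) > 0$. Then there exists $\varepsilon > 0$ such that for all $\alpha, \beta \in [0,1]$ with $|\alpha - \kappa| < \varepsilon$ and $|\beta - \kappa| < \varepsilon$, there exists a probability mass function $\mu$ on $S \times S$ whose first marginal is $P_\alpha$, whose second marginal is $P_\beta$, and such that $\mu(x, z) = 0$ whenever $x \neq z$, $x \neq y$, and $z \neq y$. -/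
open Finset

/-- finite-space coupling lemma with continuity in the parameter.
For a continuously parametrized family of pmfs `P α` on a finite nonempty type `S`
and a point `y` with `P κ y > 0`, for all parameters `α, β` close enough to `κ`
there is a coupling of `P α` and `P β` which is diagonal except possibly at `y`. -/
theorem stmt0 {S : Type*} [Fintype S] [Nonempty S]
    (P : ℝ → S → ℝ)
    (hP_nonneg : ∀ α ∈ Set.Icc (0:ℝ) 1, ∀ x : S, 0 ≤ P α x)
    (hP_sum : ∀ α ∈ Set.Icc (0:ℝ) 1, ∑ x : S, P α x = 1)
    (hP_cont : ∀ x : S, ContinuousOn (fun α => P α x) (Set.Icc (0:ℝ) 1))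
    (κ : ℝ) (hκ : κ ∈ Set.Icc (0:ℝ) 1) (y : S) (hy : 0 < P κ y) :
    ∃ ε > 0, ∀ α ∈ Set.Icc (0:ℝ) 1, ∀ β ∈ Set.Icc (0:ℝ) 1,
      |α - κ| < ε → |β - κ| < ε →
      ∃ μ : S × S → ℝ,
        (∀ p, 0 ≤ μ p) ∧
        (∑ p : S × S, μ p = 1) ∧
        (∀ x : S, ∑ z : S, μ (x, z) = P α x) ∧
        (∀ z : S, ∑ x : S, μ (x, z) = P β z) ∧
        (∀ x z : S, x ≠ z → x ≠ y → z ≠ y → μ (x, z) = 0) := by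
  classical
  set n : ℕ := Fintype.card S with hn
  set δ : ℝ := P κ y / (2 * n + 2) with hδdef
  have hδpos : 0 < δ := by
    apply div_pos hy
    positivity
  -- eventually all coordinates close
  have hev : ∀ x : S, ∀ᶠ α in nhdsWithin κ (Set.Icc 0 1), |P α x - P κ x| < δ := by
    intro x
    have h2 := (hP_cont x κ hκ) (Metric.ball_mem_nhds (P κ x) hδpos)
    filter_upwards [h2] with α hα
    simpa [Metric.mem_ball, Real.dist_eq] using hα
  have hall : ∀ᶠ α in nhdsWithin κ (Set.Icc 0 1), ∀ x : S, |P α x - P κ x| < δ := by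
    rw [show (fun α => ∀ x : S, |P α x - P κ x| < δ)
        = (fun α => ∀ x ∈ (Set.univ : Set S), |P α x - P κ x| < δ) by
      funext α; simp]
    exact (Filter.eventually_all_finite Set.finite_univ).2 fun i _ => hev i
  rcases Metric.mem_nhdsWithin_iff.1 hall with ⟨ε, hεpos, hε⟩
  refine ⟨ε, hεpos, ?_⟩
  intro α hα β hβ hαε hβε
  have hαx : ∀ x : S, |P α x - P κ x| < δ :=
    hε ⟨by simpa [Metric.mem_ball, Real.dist_eq] using hαε, hα⟩
  have hβx : ∀ x : S, |P β x - P κ x| < δ :=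
    hε ⟨by simpa [Metric.mem_ball, Real.dist_eq] using hβε, hβ⟩
  have hαnn := hP_nonneg α hα
  have hβnn := hP_nonneg β hβ
  set m : S → ℝ := fun x => min (P α x) (P β x) with hm
  set c : ℝ := P α y - ∑ z ∈ univ.erase y, (P β z - m z) with hc
  -- bound on the off terms
  have hbound : ∀ z : S, P β z - m z < 2 * δ := by
    intro z
    have h1 : P β z - m z ≤ |P β z - P α z| := by
      rcases min_choice (P α z) (P β z) with h | h
      · rw [hm]; simp only; rw [h]
        exact le_abs_self _
      · rw [hm]; simp only; rw [h]
        simp [abs_nonneg]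
    have h2 : |P β z - P α z| < 2 * δ := by
      have := hαx z; have := hβx z
      have : |P β z - P α z| ≤ |P β z - P κ z| + |P κ z - P α z| := abs_sub_le _ _ _
      have h3 : |P κ z - P α z| = |P α z - P κ z| := abs_sub_comm _ _
      linarith [hαx z, hβx z]
    linarith
  have hmnn : ∀ x : S, 0 ≤ m x := fun x => le_min (hαnn x) (hβnn x)
  have hmα : ∀ x : S, m x ≤ P α x := fun x => min_le_left _ _
  have hmβ : ∀ x : S, m x ≤ P β x := fun x => min_le_right _ _
  -- c is nonnegative
  have hcnn : 0 ≤ c := by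
    have hsum : ∑ z ∈ univ.erase y, (P β z - m z) ≤ (univ.erase y).card • (2 * δ) :=
      Finset.sum_le_card_nsmul _ _ _ fun z _ => (hbound z).le
    have hcard : ((univ.erase y).card : ℝ) ≤ n := by
      have := Finset.card_erase_le (a := y) (s := (univ : Finset S))
      have hcu : (univ : Finset S).card = n := rfl
      exact_mod_cast le_trans this (le_of_eq hcu)
    have hsum' : ∑ z ∈ univ.erase y, (P β z - m z) ≤ (n : ℝ) * (2 * δ) := by
      rw [nsmul_eq_mul] at hsum
      nlinarith [hsum, hδpos]
    have hαy : P κ y - δ < P α y := by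
      have := abs_lt.1 (hαx y); linarith
    have hδeq : (2 * (n : ℝ) + 2) * δ = P κ y := by
      rw [hδdef]; field_simp
    rw [hc]
    nlinarith
  -- the coupling
  set μ : S × S → ℝ := fun p => if p.1 = y then (if p.2 = y then c else P β p.2 - m p.2)
      else (if p.2 = y then P α p.1 - m p.1 else if p.1 = p.2 then m p.1 else 0) with hμ
  have hsumα : ∑ x ∈ univ.erase y, P α x = 1 - P α y := by
    have h := Finset.add_sum_erase univ (P α) (Finset.mem_univ y)
    rw [hP_sum α hα] at h; linarith
  have hsumβ : ∑ x ∈ univ.erase y, P β x = 1 - P β y := by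
    have h := Finset.add_sum_erase univ (P β) (Finset.mem_univ y)
    rw [hP_sum β hβ] at h; linarith
  have hrow : ∀ x : S, ∑ z : S, μ (x, z) = P α x := by
    intro x
    by_cases hx : x = y
    · subst hx
      rw [← Finset.add_sum_erase univ (fun z => μ (x, z)) (Finset.mem_univ x)]
      have h1 : μ (x, x) = c := by simp [hμ]
      have h2 : ∑ z ∈ univ.erase x, μ (x, z) = ∑ z ∈ univ.erase x, (P β z - m z) := by
        apply Finset.sum_congr rfl
        intro z hz
        have hzy : z ≠ x := (Finset.mem_erase.1 hz).1
        simp [hμ, hzy]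
      rw [h1, h2, hc]
      ring
    · rw [← Finset.add_sum_erase univ (fun z => μ (x, z)) (Finset.mem_univ y)]
      have h1 : μ (x, y) = P α x - m x := by simp [hμ, hx]
      have h2 : ∑ z ∈ univ.erase y, μ (x, z) = m x := by
        have : ∀ z ∈ univ.erase y, μ (x, z) = if x = z then m x else 0 := by
          intro z hz
          have hzy : z ≠ y := (Finset.mem_erase.1 hz).1
          simp [hμ, hx, hzy]
        rw [Finset.sum_congr rfl this, Finset.sum_ite_eq]
        simp [Finset.mem_erase, hx]
      rw [h1, h2]; ring
  have hcol : ∀ z : S, ∑ x : S, μ (x, z) = P β z := by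
    intro z
    by_cases hz : z = y
    · subst hz
      rw [← Finset.add_sum_erase univ (fun x => μ (x, z)) (Finset.mem_univ z)]
      have h1 : μ (z, z) = c := by simp [hμ]
      have h2 : ∑ x ∈ univ.erase z, μ (x, z) = ∑ x ∈ univ.erase z, (P α x - m x) := by
        apply Finset.sum_congr rfl
        intro x hx
        have hxy : x ≠ z := (Finset.mem_erase.1 hx).1
        simp [hμ, hxy]
      rw [h1, h2, hc]
      have e1 : ∑ x ∈ univ.erase z, (P α x - m x)
          = (1 - P α z) - ∑ x ∈ univ.erase z, m x := by
        rw [Finset.sum_sub_distrib, hsumα]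
      have e2 : ∑ x ∈ univ.erase z, (P β x - m x)
          = (1 - P β z) - ∑ x ∈ univ.erase z, m x := by
        rw [Finset.sum_sub_distrib, hsumβ]
      rw [e1, e2]; ring
    · rw [← Finset.add_sum_erase univ (fun x => μ (x, z)) (Finset.mem_univ y)]
      have h1 : μ (y, z) = P β z - m z := by simp [hμ, hz]
      have h2 : ∑ x ∈ univ.erase y, μ (x, z) = m z := by
        have : ∀ x ∈ univ.erase y, μ (x, z) = if x = z then m x else 0 := by
          intro x hx
          have hxy : x ≠ y := (Finset.mem_erase.1 hx).1
          simp [hμ, hxy, hz]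
        rw [Finset.sum_congr rfl this]
        rw [Finset.sum_ite_eq' (univ.erase y) z (fun x => m x)]
        simp [Finset.mem_erase, hz]
      rw [h1, h2]; ring
  refine ⟨μ, ?_, ?_, hrow, hcol, ?_⟩
  · rintro ⟨x, z⟩
    by_cases hx : x = y <;> by_cases hz : z = y <;>
      simp [hμ, hx, hz, hcnn, hmnn, sub_nonneg, hmα, hmβ] <;>
    · by_cases hxz : x = z <;> simp [hxz, hmnn, sub_nonneg, hmα, hmβ]
  · rw [Fintype.sum_prod_type]
    simp only [hrow]
    exact hP_sum α hα
  · intro x z hxz hxy hzy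
    simp [hμ, hxy, hzy, hxz]
end

section
/- Let $d \geq 2$, $k \geq 1$, $V = \text{List}(\text{Fin } d)$, and $\omega_s$ a configuration on short edges. Let $A \subseteq V$ satisfy: there exists $w \in V$ such that every $v \in A$ is of the form $w \cdot x$ with $|x| \leq k$. Let $e = \langle u, u \cdot r \rangle$ with $r \in (\text{Fin } d)^k$ be a long edge with $u \in \pi(A)$ and $u \cdot r \notin \pi(A)$. Then exactly one of the $k$ short edges in $\text{trace}(e) = \{\langle u \cdot (r_1,\ldots,r_{i-1}), u \cdot (r_1,\ldots,r_i) \rangle : 1 \leq i \leq k\}$ is a hub for $A$. -/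
/-- The progeny of a vertex `u` of the rooted `d`-ary tree: all lists with prefix `u`. -/
def prog {d : ℕ} (u : List (Fin d)) : Set (List (Fin d)) := {v | u <+: v}

/-- One step along an open short edge. -/
def shortStep {d : ℕ} (ωs : List (Fin d) → Fin d → Bool) (u v : List (Fin d)) : Prop :=
  ∃ a : Fin d, v = u ++ [a] ∧ ωs u a = true

/-- `piCl ωs A` is the cluster `π(A)` of `A` using only open short edges. -/
def piCl {d : ℕ} (ωs : List (Fin d) → Fin d → Bool) (A : Set (List (Fin d))) :
    Set (List (Fin d)) :=
  {v | ∃ u ∈ A, Relation.ReflTransGen (shortStep ωs) u v}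

/-- The short edge `⟨u, u·a⟩` is a hub for `A`. -/
def IsHub {d : ℕ} (ωs : List (Fin d) → Fin d → Bool) (A : Set (List (Fin d)))
    (u : List (Fin d)) (a : Fin d) : Prop :=
  prog (u ++ [a]) ∩ piCl ωs A = ∅ ∧ (prog u ∩ piCl ωs A).Nonempty

/- ### Auxiliary lemmas -/

lemma shortStep_prefix {d : ℕ} {ωs : List (Fin d) → Fin d → Bool} {u v : List (Fin d)}
    (h : shortStep ωs u v) : u <+: v := by
  obtain ⟨a, rfl, -⟩ := h
  exact ⟨[a], rfl⟩

lemma reach_prefix {d : ℕ} {ωs : List (Fin d) → Fin d → Bool} {u v : List (Fin d)}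
    (h : Relation.ReflTransGen (shortStep ωs) u v) : u <+: v := by
  induction h with
  | refl => exact List.prefix_refl _
  | tail _ h2 ih => exact ih.trans (shortStep_prefix h2)

/-- If `v` is reachable from `a` and `m` lies between them, then `m` is reachable from `a`. -/
lemma reach_mid {d : ℕ} {ωs : List (Fin d) → Fin d → Bool} {a v : List (Fin d)}
    (h : Relation.ReflTransGen (shortStep ωs) a v) :
    ∀ m : List (Fin d), a <+: m → m <+: v → Relation.ReflTransGen (shortStep ωs) a m := by
  induction h with
  | refl =>
    intro m h1 h2
    rw [h1.eq_of_length (le_antisymm h1.length_le h2.length_le)]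
  | @tail b c h1 h2 ih =>
    intro m ham hmv
    by_cases hle : m.length ≤ b.length
    · exact ih m ham (List.prefix_of_prefix_length_le hmv (shortStep_prefix h2) hle)
    · obtain ⟨x, rfl, hx⟩ := h2
      have hlen : m.length = (b ++ [x]).length := by
        have := hmv.length_le
        simp only [List.length_append, List.length_singleton] at this ⊢
        omega
      rw [hmv.eq_of_length hlen]
      exact h1.tail ⟨x, rfl, hx⟩

lemma prog_anti {d : ℕ} {m m' : List (Fin d)} (h : m <+: m') : prog m' ⊆ prog m :=
  fun _ hv => h.trans hv

/-- Assume `A ⊆ {w·x : |x| ≤ k}` for some vertex `w`.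
If `⟨u, u·r⟩` is a long edge (with `|r| = k`) such that `u ∈ π(A)` and `u·r ∉ π(A)`,
then exactly one of the `k` short edges in its trace is a hub for `A`.
The `i`-th short edge of the trace (for `i : Fin k`) goes from `u ++ r.take i`
to `u ++ r.take (i+1)`, with letter `r.get i`. -/
theorem stmt4 (d k : ℕ) (hd : 2 ≤ d) (hk : 1 ≤ k)
    (ωs : List (Fin d) → Fin d → Bool) (A : Set (List (Fin d)))
    (w : List (Fin d)) (hA : ∀ v ∈ A, ∃ x : List (Fin d), v = w ++ x ∧ x.length ≤ k)
    (u r : List (Fin d)) (hr : r.length = k)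
    (hu : u ∈ piCl ωs A) (hur : u ++ r ∉ piCl ωs A) :
    ∃! i : Fin k, IsHub ωs A (u ++ r.take (i : ℕ)) (r.get (Fin.cast hr.symm i)) := by
  classical
  -- the key predicate
  set Q : ℕ → Prop := fun j => (prog (u ++ r.take j) ∩ piCl ωs A).Nonempty with hQ
  -- Q is antitone
  have hmono : ∀ j j', j ≤ j' → Q j' → Q j := by
    intro j j' hjj hj'
    have htk : r.take j <+: r.take j' :=
      List.prefix_of_prefix_length_le (List.take_prefix _ _) (List.take_prefix _ _)
        (by simp only [List.length_take]; omega)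
    obtain ⟨t, ht⟩ := htk
    obtain ⟨v, hv1, hv2⟩ := hj'
    refine ⟨v, prog_anti ⟨t, by rw [List.append_assoc, ht]⟩ hv1, hv2⟩
  -- Q 0 holds
  have hQ0 : Q 0 := ⟨u, by simp [prog], hu⟩
  -- Q k fails: prog (u ++ r) ∩ π(A) = ∅
  have hQk : ¬ Q k := by
    rintro ⟨v, hv1, a, haA, hav⟩
    -- a is below w, and w is above u
    obtain ⟨a0, ha0A, ha0u⟩ := hu
    obtain ⟨x0, rfl, -⟩ := hA a0 ha0A
    obtain ⟨x, rfl, hx⟩ := hA a haA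
    have hwu : w.length ≤ u.length := by
      have := (reach_prefix ha0u).length_le
      simp only [List.length_append] at this
      omega
    have halen : (w ++ x).length ≤ (u ++ r).length := by
      simp only [List.length_append]
      omega
    -- a and u++r are both prefixes of v, so a <+: u ++ r
    have hav' : w ++ x <+: v := reach_prefix hav
    have hurv : u ++ r <+: v := by
      rw [← hr, List.take_length] at hv1
      exact hv1
    have haur : w ++ x <+: u ++ r :=
      List.prefix_of_prefix_length_le hav' hurv halen
    exact hur ⟨w ++ x, haA, reach_mid hav (u ++ r) haur hurv⟩
  -- existence of a threshold: ∃ j < k, Q j ∧ ¬ Q (j+1)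
  have hex : ∀ n, Q 0 → ¬ Q n → ∃ j, j < n ∧ Q j ∧ ¬ Q (j + 1) := by
    intro n
    induction n with
    | zero => intro h0 hn; exact absurd h0 hn
    | succ n ih =>
      intro h0 hn
      by_cases hQn : Q n
      · exact ⟨n, Nat.lt_succ_self n, hQn, hn⟩
      · obtain ⟨j, hj, hjq⟩ := ih h0 hQn
        exact ⟨j, hj.trans (Nat.lt_succ_self n), hjq⟩
  obtain ⟨j, hjk, hQj, hQj1⟩ := hex k hQ0 hQk
  -- the hub at index j corresponds to `Q j ∧ ¬ Q (j+1)`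
  have key : ∀ i : Fin k,
      IsHub ωs A (u ++ r.take (i : ℕ)) (r.get (Fin.cast hr.symm i)) ↔ (Q i ∧ ¬ Q (i + 1)) := by
    intro i
    have hik : (i : ℕ) < r.length := by rw [hr]; exact i.isLt
    have hsucc : r.take ((i : ℕ) + 1) = r.take (i : ℕ) ++ [r.get (Fin.cast hr.symm i)] := by
      rw [List.take_succ]
      congr 1
      simp [List.getElem?_eq_getElem hik, List.get_eq_getElem]
    constructor
    · rintro ⟨h1, h2⟩
      refine ⟨h2, ?_⟩
      rw [hQ]
      simp only [hsucc, ← List.append_assoc]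
      rw [Set.not_nonempty_iff_eq_empty]
      exact h1
    · rintro ⟨h1, h2⟩
      refine ⟨?_, h1⟩
      rw [hQ] at h2
      simp only [hsucc, ← List.append_assoc] at h2
      exact Set.not_nonempty_iff_eq_empty.mp h2
  refine ⟨⟨j, hjk⟩, (key ⟨j, hjk⟩).mpr ⟨hQj, hQj1⟩, ?_⟩
  intro i hi
  have hi' := (key i).mp hi
  have : (i : ℕ) = j := by
    rcases lt_trichotomy (i : ℕ) j with h | h | h
    · exact absurd (hmono _ _ h hQj) hi'.2
    · exact h
    · exact absurd (hmono _ _ h hi'.1) hQj1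
  exact Fin.ext this
end

section
/- Let $d \geq 2$, $k \geq 1$. For a configuration $\omega$ on $\mathbb{T}_{d,k}$ and $A \subseteq V$ satisfying the containment condition (there is $w$ with $A \subseteq \{w \cdot x : |x| \leq k\}$), let $\pi(A)$ be the short-edge cluster of $A$, $\sigma(A)$ the set of hubs, and for each hub $e$ let $S(A,e)$ be the set of endpoints $v'$ of open long edges $\langle u', v' \rangle$ with $u' \in \pi(A)$ and $e \in \text{trace}(\langle u',v' \rangle)$. Then the full cluster $\Pi(A)$ (vertices reachable from $A$ using all open edges) equals the disjoint union of $\pi(A)$ and the sets $\Pi(S(A,e))$ over $e \in \sigma(A)$. -/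
/-- One step along an open (short or long) edge. -/
def step {d k : ℕ} (ωs : List (Fin d) → Fin d → Bool)
    (ωl : List (Fin d) → (Fin k → Fin d) → Bool) (u v : List (Fin d)) : Prop :=
  shortStep ωs u v ∨ ∃ r : Fin k → Fin d, v = u ++ List.ofFn r ∧ ωl u r = true

/-- `Π(A)`: the cluster of `A` using all open edges, short and long. -/
def PiCl {d k : ℕ} (ωs : List (Fin d) → Fin d → Bool)
    (ωl : List (Fin d) → (Fin k → Fin d) → Bool) (A : Set (List (Fin d))) :
    Set (List (Fin d)) :=
  {v | ∃ u ∈ A, Relation.ReflTransGen (step ωs ωl) u v}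

/-- The short edge `⟨x, x·a⟩` belongs to the trace of the long edge `⟨u', u'·r⟩`. -/
def TraceMem {d k : ℕ} (x : List (Fin d)) (a : Fin d)
    (u' : List (Fin d)) (r : Fin k → Fin d) : Prop :=
  ∃ i : Fin k, x = u' ++ (List.ofFn r).take (i : ℕ) ∧ a = r i

/-- `S(A,e)` for a hub `e = ⟨x, x·a⟩`: endpoints of open long edges starting in `π(A)`
whose trace passes through `e`. -/
def exitSet {d k : ℕ} (ωs : List (Fin d) → Fin d → Bool)
    (ωl : List (Fin d) → (Fin k → Fin d) → Bool)
    (A : Set (List (Fin d))) (e : List (Fin d) × Fin d) : Set (List (Fin d)) :=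
  {v | ∃ u' : List (Fin d), ∃ r : Fin k → Fin d,
    u' ∈ piCl ωs A ∧ ωl u' r = true ∧ TraceMem e.1 e.2 u' r ∧ v = u' ++ List.ofFn r}

/-!
A vertex of `Π(A)` is reached by a path of open edges. As long as the path stays in `π(A)`,
each short step stays in `π(A)`; the first long edge that leaves `π(A)` must cross a hub, namely
the last short edge of its trace whose tail still has descendants in `π(A)`, and from then on the
path lies in `Π(S(A,e))`. Since all edges point away from the root, `Π(S(A,e))` lies in the
progeny of the hub's head, which misses `π(A)` by definition of a hub and is disjoint from the
progeny of any other hub.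
-/

open Relation

lemma prefix_of_reflTransGen {α : Type*} {r : List α → List α → Prop}
    (hr : ∀ u v, r u v → u <+: v) {u v : List α} (h : ReflTransGen r u v) : u <+: v :=
  (reflTransGen_eq_self (r := fun a b : List α => a <+: b)).le _ _ (ReflTransGen.mono hr _ _ h)

lemma Nat.exists_boundary_of_zero_of_not {P : ℕ → Prop} {n : ℕ} (h0 : P 0) (hn : ¬ P n) :
    ∃ i < n, P i ∧ ¬ P (i + 1) := by
  induction n with
  | zero => exact absurd h0 hn
  | succ m ih =>
    by_cases hm : P m
    · exact ⟨m, m.lt_succ_self, hm, hn⟩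
    · obtain ⟨i, hi, hPi, hPi'⟩ := ih hm
      exact ⟨i, hi.trans m.lt_succ_self, hPi, hPi'⟩

lemma List.take_succ_ofFn {α : Type*} {k : ℕ} (r : Fin k → α) (i : Fin k) :
    (List.ofFn r).take (i + 1) = (List.ofFn r).take i ++ [r i] := by
  have hi : (i : ℕ) < (List.ofFn r).length := by simp
  rw [← List.take_concat_get' _ _ hi, List.getElem_ofFn]

section Clusters

variable {d k : ℕ} {ωs : List (Fin d) → Fin d → Bool}
  {ωl : List (Fin d) → (Fin k → Fin d) → Bool} {A : Set (List (Fin d))}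

lemma shortStep.prefix {u v : List (Fin d)} (h : shortStep ωs u v) : u <+: v := by
  obtain ⟨a, rfl, -⟩ := h
  exact List.prefix_append _ _

lemma step.prefix {u v : List (Fin d)} (h : step ωs ωl u v) : u <+: v := by
  rcases h with h | ⟨r, rfl, -⟩
  · exact h.prefix
  · exact List.prefix_append _ _

lemma step_of_shortStep {u v : List (Fin d)} (h : shortStep ωs u v) : step ωs ωl u v :=
  Or.inl h

lemma reflTransGen_shortStep_of_prefix {u v z : List (Fin d)}
    (h : ReflTransGen (shortStep ωs) u z) (huv : u <+: v) (hvz : v <+: z) :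
    ReflTransGen (shortStep ωs) u v := by
  induction h with
  | refl => rw [hvz.eq_of_length_le huv.length_le]
  | @tail z' z hz' hs ih =>
    obtain ⟨a, rfl, ha⟩ := hs
    rcases Nat.lt_or_ge z'.length v.length with hlt | hge
    · rw [hvz.eq_of_length_le (by simpa using hlt)]
      exact hz'.tail ⟨a, rfl, ha⟩
    · exact ih (List.prefix_of_prefix_length_le hvz (List.prefix_append _ _) hge)

lemma mem_piCl_of_prefix {v z : List (Fin d)} (hz : z ∈ piCl ωs A) (hvz : v <+: z)
    (hlen : ∀ u ∈ A, u.length ≤ v.length) : v ∈ piCl ωs A := by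
  obtain ⟨u, hu, hpath⟩ := hz
  have huv : u <+: v := List.prefix_of_prefix_length_le
    (prefix_of_reflTransGen (fun _ _ => shortStep.prefix) hpath) hvz (hlen u hu)
  exact ⟨u, hu, reflTransGen_shortStep_of_prefix hpath huv hvz⟩

lemma piCl_subset_PiCl : piCl ωs A ⊆ PiCl ωs ωl A := fun _ ⟨u, hu, hpath⟩ =>
  ⟨u, hu, ReflTransGen.mono (fun _ _ => step_of_shortStep) _ _ hpath⟩

lemma IsHub.disjoint_prog_piCl {x : List (Fin d)} {a : Fin d} (he : IsHub ωs A x a) :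
    Disjoint (prog (x ++ [a])) (piCl ωs A) :=
  Set.disjoint_iff_inter_eq_empty.mpr he.1

lemma IsHub.eq_of_prefix {e e' : List (Fin d) × Fin d} (he : IsHub ωs A e.1 e.2)
    (he' : IsHub ωs A e'.1 e'.2) (h : e.1 ++ [e.2] <+: e'.1 ++ [e'.2]) : e = e' := by
  rcases Nat.lt_or_ge (e.1 ++ [e.2]).length (e'.1 ++ [e'.2]).length with hlt | hge
  · have hprefix : e.1 ++ [e.2] <+: e'.1 :=
      List.prefix_of_prefix_length_le h (List.prefix_append _ _) (by simp at hlt ⊢; omega)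
    obtain ⟨z, hz, hzA⟩ := he'.2
    exact absurd hzA (he.disjoint_prog_piCl.notMem_of_mem_left (hprefix.trans hz))
  · obtain ⟨h1, h2⟩ := List.append_inj' (h.eq_of_length_le hge) rfl
    exact Prod.ext h1 (List.singleton_inj.mp h2)

lemma exists_isHub_in_trace {w : List (Fin d)}
    (hA : ∀ v ∈ A, ∃ x : List (Fin d), v = w ++ x ∧ x.length ≤ k)
    {u : List (Fin d)} {r : Fin k → Fin d}
    (hu : u ∈ piCl ωs A) (hv : u ++ List.ofFn r ∉ piCl ωs A) :
    ∃ i : Fin k, IsHub ωs A (u ++ (List.ofFn r).take i) (r i) := by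
  set P : ℕ → Prop := fun i => (prog (u ++ (List.ofFn r).take i) ∩ piCl ωs A).Nonempty
  have h0 : P 0 := ⟨u, by simpa [prog] using hu⟩
  have hwu : w.length ≤ u.length := by
    obtain ⟨u₀, hu₀, hpath⟩ := hu
    obtain ⟨x, rfl, -⟩ := hA u₀ hu₀
    have := (prefix_of_reflTransGen (fun _ _ => shortStep.prefix) hpath).length_le
    simp only [List.length_append] at this
    omega
  -- By containment, `u ++ ofFn r` is at least as deep as every vertex of `A`, so it lies in
  -- `π(A)` as soon as one of its descendants does.
  have hk : ¬ P k := by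
    rintro ⟨z, hz, hzA⟩
    have htake : (List.ofFn r).take k = List.ofFn r := List.take_of_length_le (by simp)
    refine hv (mem_piCl_of_prefix hzA (by simpa [prog, htake] using hz) fun v hv => ?_)
    obtain ⟨x, rfl, hx⟩ := hA v hv
    simp only [List.length_append, List.length_ofFn]
    omega
  obtain ⟨i, hik, hPi, hPi'⟩ := Nat.exists_boundary_of_zero_of_not h0 hk
  refine ⟨⟨i, hik⟩, Set.eq_empty_iff_forall_notMem.mpr fun z hz => hPi' ⟨z, ?_, hz.2⟩, hPi⟩
  have hz' : u ++ (List.ofFn r).take i ++ [r ⟨i, hik⟩] <+: z := hz.1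
  rwa [List.append_assoc, ← List.take_succ_ofFn r ⟨i, hik⟩] at hz'

lemma PiCl_exitSet_subset_prog (e : List (Fin d) × Fin d) :
    PiCl ωs ωl (exitSet ωs ωl A e) ⊆ prog (e.1 ++ [e.2]) := by
  rintro z ⟨_, ⟨u, r, -, -, ⟨i, hx, ha⟩, rfl⟩, hpath⟩
  change e.1 ++ [e.2] <+: z
  rw [hx, ha]
  refine List.IsPrefix.trans ?_ (prefix_of_reflTransGen (fun _ _ => step.prefix) hpath)
  rw [List.append_assoc, ← List.take_succ_ofFn, List.prefix_append_right_inj]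
  exact List.take_prefix _ _

lemma PiCl_exitSet_subset_PiCl (e : List (Fin d) × Fin d) :
    PiCl ωs ωl (exitSet ωs ωl A e) ⊆ PiCl ωs ωl A := by
  rintro z ⟨_, ⟨u, r, ⟨u₀, hu₀, hpath₀⟩, hr, -, rfl⟩, hpath⟩
  refine ⟨u₀, hu₀, ?_⟩
  exact ((ReflTransGen.mono (fun _ _ => step_of_shortStep) _ _ hpath₀).tail
    (Or.inr ⟨r, rfl, hr⟩)).trans hpath

lemma PiCl_subset_piCl_union {w : List (Fin d)}
    (hA : ∀ v ∈ A, ∃ x : List (Fin d), v = w ++ x ∧ x.length ≤ k) :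
    PiCl ωs ωl A ⊆ piCl ωs A ∪ ⋃ e ∈ {e : List (Fin d) × Fin d | IsHub ωs A e.1 e.2},
      PiCl ωs ωl (exitSet ωs ωl A e) := by
  rintro z ⟨u, hu, hpath⟩
  induction hpath with
  | refl => exact Or.inl ⟨u, hu, .refl⟩
  | @tail v v' _ hs ih =>
    rcases ih with ⟨u₀, hu₀, hpath₀⟩ | hv
    · rcases hs with hs | ⟨r, rfl, hr⟩
      · exact Or.inl ⟨u₀, hu₀, hpath₀.tail hs⟩
      by_cases hmem : v ++ List.ofFn r ∈ piCl ωs A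
      · exact Or.inl hmem
      obtain ⟨i, hhub⟩ := exists_isHub_in_trace hA ⟨u₀, hu₀, hpath₀⟩ hmem
      exact Or.inr <| Set.mem_biUnion (x := (v ++ (List.ofFn r).take i, r i)) hhub
        ⟨_, ⟨v, r, ⟨u₀, hu₀, hpath₀⟩, hr, ⟨i, rfl, rfl⟩, rfl⟩, .refl⟩
    · obtain ⟨e, he, ⟨s, hs', hpath'⟩⟩ := Set.mem_iUnion₂.mp hv
      exact Or.inr (Set.mem_biUnion he ⟨s, hs', hpath'.tail hs⟩)

end Clusters

theorem stmt15_general (d k : ℕ)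
    (ωs : List (Fin d) → Fin d → Bool)
    (ωl : List (Fin d) → (Fin k → Fin d) → Bool)
    (A : Set (List (Fin d)))
    (w : List (Fin d)) (hA : ∀ v ∈ A, ∃ x : List (Fin d), v = w ++ x ∧ x.length ≤ k) :
    PiCl ωs ωl A =
      piCl ωs A ∪ (⋃ e ∈ {e : List (Fin d) × Fin d | IsHub ωs A e.1 e.2},
        PiCl ωs ωl (exitSet ωs ωl A e)) ∧
    (∀ e ∈ {e : List (Fin d) × Fin d | IsHub ωs A e.1 e.2},
      Disjoint (piCl ωs A) (PiCl ωs ωl (exitSet ωs ωl A e))) ∧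
    (∀ e ∈ {e : List (Fin d) × Fin d | IsHub ωs A e.1 e.2},
      ∀ e' ∈ {e : List (Fin d) × Fin d | IsHub ωs A e.1 e.2}, e ≠ e' →
        Disjoint (PiCl ωs ωl (exitSet ωs ωl A e)) (PiCl ωs ωl (exitSet ωs ωl A e'))) := by
  refine ⟨(PiCl_subset_piCl_union hA).antisymm
    (Set.union_subset piCl_subset_PiCl (Set.iUnion₂_subset fun e _ => PiCl_exitSet_subset_PiCl e)),
    fun e he => (IsHub.disjoint_prog_piCl he).symm.mono_right (PiCl_exitSet_subset_prog e),
    fun e he e' he' hne => Set.disjoint_left.mpr fun z hz hz' => hne ?_⟩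
  rcases List.prefix_or_prefix_of_prefix (PiCl_exitSet_subset_prog e hz)
    (PiCl_exitSet_subset_prog e' hz') with h | h
  · exact IsHub.eq_of_prefix he he' h
  · exact (IsHub.eq_of_prefix he' he h).symm

/-- Under the containment condition on `A`, the full cluster `Π(A)`
is the disjoint union of `π(A)` and the clusters `Π(S(A,e))` over the hubs `e` of `A`. -/
theorem stmt15 (d k : ℕ) (hd : 2 ≤ d) (hk : 1 ≤ k)
    (ωs : List (Fin d) → Fin d → Bool)
    (ωl : List (Fin d) → (Fin k → Fin d) → Bool)
    (A : Set (List (Fin d)))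
    (w : List (Fin d)) (hA : ∀ v ∈ A, ∃ x : List (Fin d), v = w ++ x ∧ x.length ≤ k) :
    PiCl ωs ωl A =
      piCl ωs A ∪ (⋃ e ∈ {e : List (Fin d) × Fin d | IsHub ωs A e.1 e.2},
        PiCl ωs ωl (exitSet ωs ωl A e)) ∧
    (∀ e ∈ {e : List (Fin d) × Fin d | IsHub ωs A e.1 e.2},
      Disjoint (piCl ωs A) (PiCl ωs ωl (exitSet ωs ωl A e))) ∧
    (∀ e ∈ {e : List (Fin d) × Fin d | IsHub ωs A e.1 e.2},
      ∀ e' ∈ {e : List (Fin d) × Fin d | IsHub ωs A e.1 e.2}, e ≠ e' →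
        Disjoint (PiCl ωs ωl (exitSet ωs ωl A e)) (PiCl ωs ωl (exitSet ωs ωl A e'))) :=
  stmt15_general d k ωs ωl A w hA
end

section
/- Let $d \geq 2$, $k \geq 1$. Suppose that for all $p_0, q, q' \in (0,1)$ with $q < q'$ there exist $p' < p_0 < p$ with $\P_{p',q'}(o \leadsto \infty) \geq \P_{p,q}(o \leadsto \infty)$ (condition (A)), and that $q \mapsto q_c$ facts hold: $q_c(p,k)$ is nonincreasing in $p$ and $(p,q) \in \mathcal{P}_k$ iff $\P_{p,q}(o\leadsto\infty) > 0$ with $\mathcal{P}_k$ an up-set. Then condition (A) implies that $p \mapsto q_c(p,k)$ has no jump discontinuities on $(0,1)$, i.e., it is continuous on $(0,1)$. -/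
open Set

/-- Let `θ p q = ℙ_{p,q}(o ⇝ ∞)` be the percolation probability of
`𝕋_{d,k}`, assumed nondecreasing in each variable on `[0,1]` (so the percolative region
`𝒫_k = {θ > 0}` is an up-set), and let
`q_c(p) = inf {q ∈ [0,1] : θ p q > 0}` (with `inf ∅ = 1`), assumed nonincreasing in `p`.
Suppose condition (A): for all `p₀, q, q' ∈ (0,1)` with `q < q'` there exist
`p' < p₀ < p` in `[0,1]` such that `θ p' q' ≥ θ p q`. Then `p ↦ q_c(p)` has no jump
discontinuities on `(0,1)`, i.e. it is continuous on `(0,1)`. -/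
theorem stmt18 (d k : ℕ) (hd : 2 ≤ d) (hk : 1 ≤ k)
    (θ : ℝ → ℝ → ℝ)
    (hmono_p : ∀ q ∈ Icc (0:ℝ) 1, MonotoneOn (fun p => θ p q) (Icc (0:ℝ) 1))
    (hmono_q : ∀ p ∈ Icc (0:ℝ) 1, MonotoneOn (fun q => θ p q) (Icc (0:ℝ) 1))
    (qc : ℝ → ℝ)
    (hqc : ∀ p, qc p = sInf ({q | q ∈ Icc (0:ℝ) 1 ∧ 0 < θ p q} ∪ {1}))
    (hqc_anti : AntitoneOn qc (Icc (0:ℝ) 1))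
    (hA : ∀ p₀ ∈ Ioo (0:ℝ) 1, ∀ q ∈ Ioo (0:ℝ) 1, ∀ q' ∈ Ioo (0:ℝ) 1, q < q' →
      ∃ p ∈ Icc (0:ℝ) 1, ∃ p' ∈ Icc (0:ℝ) 1,
        p' < p₀ ∧ p₀ < p ∧ θ p q ≤ θ p' q') :
    ContinuousOn qc (Ioo (0:ℝ) 1) := by
  have hbdd : ∀ p : ℝ, BddBelow ({q | q ∈ Icc (0:ℝ) 1 ∧ 0 < θ p q} ∪ {1}) := by
    intro p
    refine ⟨0, ?_⟩
    rintro x (⟨⟨hx0, _⟩, _⟩ | rfl)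
    · exact hx0
    · norm_num
  have hne : ∀ p : ℝ, ({q | q ∈ Icc (0:ℝ) 1 ∧ 0 < θ p q} ∪ {1}).Nonempty :=
    fun p => ⟨1, Or.inr rfl⟩
  have hqc_le1 : ∀ p, qc p ≤ 1 := by
    intro p; rw [hqc]; exact csInf_le (hbdd p) (Or.inr rfl)
  have hqc_ge0 : ∀ p, 0 ≤ qc p := by
    intro p; rw [hqc]
    refine le_csInf (hne p) ?_
    rintro x (⟨⟨hx0, _⟩, _⟩ | rfl)
    · exact hx0
    · norm_num
  -- if qc p < q ≤ 1 then θ p q > 0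
  have key1 : ∀ p ∈ Icc (0:ℝ) 1, ∀ q ∈ Icc (0:ℝ) 1, qc p < q → 0 < θ p q := by
    intro p hp q hq hlt
    rw [hqc] at hlt
    obtain ⟨x, hxS, hxq⟩ := exists_lt_of_csInf_lt (hne p) hlt
    rcases hxS with ⟨hx01, hθx⟩ | rfl
    · calc (0:ℝ) < θ p x := hθx
        _ ≤ θ p q := hmono_q p hp hx01 hq hxq.le
    · exact absurd hxq (not_lt.2 hq.2)
  -- if θ p q' > 0 with q' ∈ [0,1], then qc p ≤ q'
  have key2 : ∀ p : ℝ, ∀ q' ∈ Icc (0:ℝ) 1, 0 < θ p q' → qc p ≤ q' := by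
    intro p q' hq' hθ
    rw [hqc]
    exact csInf_le (hbdd p) (Or.inl ⟨hq', hθ⟩)
  intro p₀ hp₀
  obtain ⟨hp₀0, hp₀1⟩ := hp₀
  have hp₀I : p₀ ∈ Icc (0:ℝ) 1 := ⟨hp₀0.le, hp₀1.le⟩
  set P₂ : Set ℝ := qc '' Ioo p₀ 1 with hP₂
  set P₁ : Set ℝ := qc '' Ioo 0 p₀ with hP₁
  have hP₂ne : P₂.Nonempty := ⟨qc ((p₀ + 1) / 2), ⟨(p₀ + 1) / 2, ⟨by linarith, by linarith⟩, rfl⟩⟩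
  have hP₁ne : P₁.Nonempty := ⟨qc (p₀ / 2), ⟨p₀ / 2, ⟨by linarith, by linarith⟩, rfl⟩⟩
  have hP₂bdd : BddAbove P₂ := ⟨1, by rintro x ⟨p, _, rfl⟩; exact hqc_le1 p⟩
  have hP₁bdd : BddBelow P₁ := ⟨0, by rintro x ⟨p, _, rfl⟩; exact hqc_ge0 p⟩
  set A := sSup P₂ with hAdef
  set B := sInf P₁ with hBdef
  have hmemIcc : ∀ p ∈ Ioo p₀ 1, p ∈ Icc (0:ℝ) 1 := fun p hp => ⟨by linarith [hp.1], hp.2.le⟩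
  have hmemIcc' : ∀ p ∈ Ioo (0:ℝ) p₀, p ∈ Icc (0:ℝ) 1 := fun p hp => ⟨hp.1.le, by linarith [hp.2]⟩
  have hA_le : A ≤ qc p₀ := by
    refine csSup_le hP₂ne ?_
    rintro x ⟨p, hp, rfl⟩
    exact hqc_anti hp₀I (hmemIcc p hp) hp.1.le
  have hB_ge : qc p₀ ≤ B := by
    refine le_csInf hP₁ne ?_
    rintro x ⟨p, hp, rfl⟩
    exact hqc_anti (hmemIcc' p hp) hp₀I hp.2.le
  have hA0 : 0 ≤ A := le_trans (hqc_ge0 ((p₀ + 1) / 2))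
    (le_csSup hP₂bdd ⟨(p₀ + 1) / 2, ⟨by linarith, by linarith⟩, rfl⟩)
  have hB1 : B ≤ 1 := le_trans (csInf_le hP₁bdd ⟨p₀ / 2, ⟨by linarith, by linarith⟩, rfl⟩)
    (hqc_le1 _)
  have hBA : B ≤ A := by
    by_contra hcon
    push_neg at hcon
    set q : ℝ := A + (B - A) / 3 with hqdef
    set q' : ℝ := A + 2 * (B - A) / 3 with hq'def
    have hq : q ∈ Ioo (0:ℝ) 1 := ⟨by simp only [hqdef]; linarith, by simp only [hqdef]; linarith⟩
    have hq' : q' ∈ Ioo (0:ℝ) 1 :=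
      ⟨by simp only [hq'def]; linarith, by simp only [hq'def]; linarith⟩
    have hqq' : q < q' := by simp only [hqdef, hq'def]; linarith
    obtain ⟨p, hp, p', hp', hp'lt, hltp, hθle⟩ :=
      hA p₀ ⟨hp₀0, hp₀1⟩ q hq q' hq' hqq'
    -- θ p q > 0
    have hθp : 0 < θ p q := by
      set pb : ℝ := (p₀ + p) / 2 with hpbdef
      have hpbI : pb ∈ Ioo p₀ 1 := ⟨by simp only [hpbdef]; linarith, by
        simp only [hpbdef]; linarith [hp.2]⟩
      have hqcpb : qc pb ≤ A := le_csSup hP₂bdd ⟨pb, hpbI, rfl⟩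
      have h1 : 0 < θ pb q := key1 pb (hmemIcc pb hpbI) q ⟨hq.1.le, hq.2.le⟩
        (lt_of_le_of_lt hqcpb (by simp only [hqdef]; linarith))
      calc (0:ℝ) < θ pb q := h1
        _ ≤ θ p q := hmono_p q ⟨hq.1.le, hq.2.le⟩ (hmemIcc pb hpbI) hp
            (by simp only [hpbdef]; linarith)
    have hθp' : 0 < θ p' q' := lt_of_lt_of_le hθp hθle
    have hqcp' : qc p' ≤ q' := key2 p' q' ⟨hq'.1.le, hq'.2.le⟩ hθp'
    set pc : ℝ := (p' + p₀) / 2 with hpcdef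
    have hpcI : pc ∈ Ioo (0:ℝ) p₀ := ⟨by simp only [hpcdef]; linarith [hp'.1],
      by simp only [hpcdef]; linarith⟩
    have hqcpc : qc pc ≤ qc p' := hqc_anti hp' (hmemIcc' pc hpcI)
      (by simp only [hpcdef]; linarith)
    have : B ≤ qc pc := csInf_le hP₁bdd ⟨pc, hpcI, rfl⟩
    have : B ≤ q' := le_trans this (le_trans hqcpc hqcp')
    simp only [hq'def] at this
    linarith
  have hAeq : A = qc p₀ := le_antisymm hA_le (le_trans hB_ge hBA)
  have hBeq : B = qc p₀ := le_antisymm (hBA.trans hA_le) hB_ge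
  -- now prove continuity at p₀
  rw [Metric.continuousWithinAt_iff]
  intro ε hε
  have h2 : qc p₀ - ε < A := by rw [hAeq]; linarith
  obtain ⟨x₂, hx₂S, hx₂⟩ := exists_lt_of_lt_csSup hP₂ne h2
  obtain ⟨p₂, hp₂, rfl⟩ := hx₂S
  have h1 : B < qc p₀ + ε := by rw [hBeq]; linarith
  obtain ⟨x₁, hx₁S, hx₁⟩ := exists_lt_of_csInf_lt hP₁ne h1
  obtain ⟨p₁, hp₁, rfl⟩ := hx₁S
  refine ⟨min (p₀ - p₁) (p₂ - p₀),
    lt_min (by linarith [hp₁.2]) (by linarith [hp₂.1]), ?_⟩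
  intro x hx hdist
  rw [Real.dist_eq] at hdist ⊢
  have hxlt : x < p₂ := by
    have := abs_lt.1 hdist
    have := this.2
    have hle : min (p₀ - p₁) (p₂ - p₀) ≤ p₂ - p₀ := min_le_right _ _
    linarith
  have hxgt : p₁ < x := by
    have := abs_lt.1 hdist
    have := this.1
    have hle : min (p₀ - p₁) (p₂ - p₀) ≤ p₀ - p₁ := min_le_left _ _
    linarith
  have hxI : x ∈ Icc (0:ℝ) 1 := ⟨hx.1.le, hx.2.le⟩
  have hup : qc x ≤ qc p₁ := hqc_anti (hmemIcc' p₁ hp₁) hxI hxgt.le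
  have hlo : qc p₂ ≤ qc x := hqc_anti hxI (hmemIcc p₂ hp₂) hxlt.le
  rw [abs_lt]
  constructor <;> linarith
end
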